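/- Let d ≥ 1, θ* ∈ ℝ^d, and W₀ ∈ ℝ^{d×d} symmetric positive definite. On a probability space (Ω, F, P), let (η_i)_{i≥1} be i.i.d. real random variables with E[η_i] = 0 and E[η_i²] = σ², and let F_s = σ(η₁,…,η_s). Let each action x_i be an F_{i−1}-measurable random vector in ℝ^d with ‖x_i‖₂ = 1 almost surely, and let θ̂_t = (X_tᵀX_t + W₀)⁻¹X_tᵀY_t where X_t ∈ ℝ^{t×d} has rows x₁,…,x_t and Y_t = X_tθ* + (η₁,…,η_t)ᵀ. Then liminf_{t→∞} t · E[‖θ̂_t − θ*‖₂²] ≥ σ². That is, the mean square estimation error of any adaptive policy is at least σ²/t + o(1/t). -/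

import Mathlib

/-!
Write `V = W₀ + XᵀX` and `e = θ̂ - θ*`. The normal equations give `V e = Xᵀη - W₀θ*`, and since
the design rows are unit vectors, `‖V‖ ≤ ‖W₀‖ + t` (Frobenius norm), so
`‖e‖² ≥ ‖Xᵀη - W₀θ*‖² / (t + ‖W₀‖)²`. The vector `Xᵀη - W₀θ* = -W₀θ* + ∑_{i<t} ηᵢ xᵢ` is a sum of
orthogonal increments: `xᵢ` only depends on the past noise, which is independent of `ηᵢ`, so
`E‖Xᵀη - W₀θ*‖² = ‖W₀θ*‖² + tσ²`. Hence `t E‖e‖² ≥ σ² (t / (t + ‖W₀‖))² → σ²`.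
-/

open MeasureTheory ProbabilityTheory Matrix Filter Finset Topology

attribute [local instance] Matrix.frobeniusNormedAddCommGroup

section LinearAlgebra

theorem transpose_of_mulVec_eq_sum_range {n R : Type*} [CommSemiring R] (x : ℕ → n → R)
    (ε : ℕ → R) (t : ℕ) :
    (of fun (i : Fin t) j => x i j)ᵀ *ᵥ (fun i : Fin t => ε i) = ∑ i ∈ range t, ε i • x i := by
  rw [mulVec_transpose, vecMul_eq_sum, ← Fin.sum_univ_eq_sum_range (fun i => ε i • x i)]
  rfl

variable {m n : Type*} [Fintype m] [Fintype n]

theorem mulVec_inv_mulVec_sub {R : Type*} [CommRing R] [DecidableEq n] (V : Matrix n n R)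
    (hV : IsUnit V.det) (b θ : n → R) : V *ᵥ (V⁻¹ *ᵥ b - θ) = b - V *ᵥ θ := by
  rw [mulVec_sub, mulVec_mulVec, mul_nonsing_inv _ hV, one_mulVec]

theorem Matrix.PosDef.isUnit_det_add_transpose_mul_self [DecidableEq n] {W : Matrix n n ℝ}
    (hW : W.PosDef) (X : Matrix m n ℝ) : IsUnit (W + Xᵀ * X).det := by
  have hX : (Xᵀ * X).PosSemidef := by
    simpa using posSemidef_conjTranspose_mul_self X
  exact isUnit_iff_ne_zero.mpr (hW.add_posSemidef hX).det_pos.ne'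

theorem dotProduct_self_eq_norm_toLp_sq (v : n → ℝ) : v ⬝ᵥ v = ‖WithLp.toLp 2 v‖ ^ 2 := by
  rw [EuclideanSpace.real_norm_sq_eq]
  simp [dotProduct, sq]

theorem dotProduct_self_nonneg (v : n → ℝ) : 0 ≤ v ⬝ᵥ v := by
  simpa using dotProduct_self_star_nonneg v

theorem norm_toLp_mulVec_le_frobenius (A : Matrix m n ℝ) (v : n → ℝ) :
    ‖WithLp.toLp 2 (A *ᵥ v)‖ ≤ ‖A‖ * ‖WithLp.toLp 2 v‖ := by
  simpa only [← frobenius_norm_replicateCol (ι := Unit), replicateCol_mulVec]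
    using frobenius_norm_mul A (replicateCol Unit v)

theorem frobenius_norm_of_dotProduct_rows_eq_one {t : ℕ} (X : Matrix (Fin t) n ℝ)
    (hX : ∀ i, X i ⬝ᵥ X i = 1) : ‖X‖ = √t := by
  have hrow : ∀ i, ∑ j, X i j ^ 2 = 1 := fun i => by simpa [dotProduct, sq] using hX i
  rw [frobenius_norm_def, ← Real.sqrt_eq_rpow]
  simp [hrow]

theorem dotProduct_mulVec_self_le (A : Matrix m n ℝ) (v : n → ℝ) :
    (A *ᵥ v) ⬝ᵥ (A *ᵥ v) ≤ ‖A‖ ^ 2 * (v ⬝ᵥ v) := by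
  rw [dotProduct_self_eq_norm_toLp_sq, dotProduct_self_eq_norm_toLp_sq, ← mul_pow]
  gcongr
  exact norm_toLp_mulVec_le_frobenius A v

theorem frobenius_norm_add_transpose_mul_self_le {t : ℕ} (W : Matrix n n ℝ)
    (X : Matrix (Fin t) n ℝ) (hX : ∀ i, X i ⬝ᵥ X i = 1) : ‖W + Xᵀ * X‖ ≤ t + ‖W‖ := by
  have hXX : ‖Xᵀ * X‖ ≤ t := by
    calc ‖Xᵀ * X‖ ≤ ‖Xᵀ‖ * ‖X‖ := frobenius_norm_mul _ _
      _ = t := by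
        rw [frobenius_norm_transpose, frobenius_norm_of_dotProduct_rows_eq_one X hX,
          Real.mul_self_sqrt t.cast_nonneg]
  linarith [norm_add_le W (Xᵀ * X)]

theorem dotProduct_self_le_of_regularizedLeastSquares {t : ℕ} [DecidableEq n]
    {W : Matrix n n ℝ} (hW : W.PosDef) (X : Matrix (Fin t) n ℝ) (hX : ∀ i, X i ⬝ᵥ X i = 1)
    (θ : n → ℝ) (ε : Fin t → ℝ) :
    let e := (W + Xᵀ * X)⁻¹ *ᵥ (Xᵀ *ᵥ (X *ᵥ θ + ε)) - θ
    (Xᵀ *ᵥ ε - W *ᵥ θ) ⬝ᵥ (Xᵀ *ᵥ ε - W *ᵥ θ) ≤ (t + ‖W‖) ^ 2 * (e ⬝ᵥ e) := by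
  intro e
  have hVe : (W + Xᵀ * X) *ᵥ e = Xᵀ *ᵥ ε - W *ᵥ θ := by
    rw [mulVec_inv_mulVec_sub _ (hW.isUnit_det_add_transpose_mul_self X), mulVec_add,
      mulVec_mulVec, add_mulVec]
    abel
  rw [← hVe]
  refine (dotProduct_mulVec_self_le _ e).trans ?_
  gcongr
  · exact dotProduct_self_eq_norm_toLp_sq e ▸ sq_nonneg _
  · exact frobenius_norm_add_transpose_mul_self_le W X hX

end LinearAlgebra

section PastFiltration

variable {Ω β : Type*} {mΩ : MeasurableSpace Ω} [MeasurableSpace β]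

def pastFiltration (η : ℕ → Ω → β) (hη : ∀ i, Measurable (η i)) : Filtration ℕ mΩ where
  seq j := MeasurableSpace.comap (fun ω (k : Fin j) => η k ω) inferInstance
  mono' i j hij := by
    have hrestrict : Measurable[MeasurableSpace.comap (fun ω (k : Fin j) => η k ω) inferInstance]
        fun ω (k : Fin i) => η k ω :=
      (measurable_pi_lambda (fun (v : Fin j → β) (k : Fin i) => v (Fin.castLE hij k)) fun _ =>
        measurable_pi_apply _).comp
        (comap_measurable fun ω (k : Fin j) => η k ω)
    exact hrestrict.comap_le
  le' j := (measurable_pi_lambda (fun ω (k : Fin j) => η k ω) fun k => hη k).comap_le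

variable {η : ℕ → Ω → β} {hη : ∀ i, Measurable (η i)}

theorem measurable_pastFiltration_succ (i : ℕ) :
    Measurable[pastFiltration η hη (i + 1)] (η i) :=
  (measurable_pi_apply (Fin.last i)).comp (comap_measurable (fun ω (k : Fin (i + 1)) => η k ω))

theorem ProbabilityTheory.iIndepFun.indep_pastFiltration {P : Measure Ω} (h : iIndepFun η P)
    (j : ℕ) : Indep (pastFiltration η hη j) (MeasurableSpace.comap (η j) inferInstance) P := by
  have hpast := (h.indepFun_finset (range j) {j} (by simp) hη).comp
    (φ := fun v (k : Fin j) => v ⟨k, mem_range.mpr k.2⟩)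
    (ψ := fun v => v ⟨j, mem_singleton_self j⟩)
    (measurable_pi_lambda _ fun _ => measurable_pi_apply _)
    (measurable_pi_apply _ :
      Measurable fun v : ({j} : Finset ℕ) → β => v ⟨j, mem_singleton_self j⟩)
  exact hpast

end PastFiltration

section Orthogonality

variable {Ω n : Type*} [Fintype n] {m mΩ : MeasurableSpace Ω} {P : Measure Ω}

theorem dotProduct_mul_self_le (v w : n → ℝ) : (v ⬝ᵥ w) * (v ⬝ᵥ w) ≤ (v ⬝ᵥ v) * (w ⬝ᵥ w) := by
  simpa [dotProduct, sq] using Finset.sum_mul_sq_le_sq_mul_sq univ v w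

theorem Measurable.dotProduct {f g : Ω → n → ℝ} (hf : Measurable f) (hg : Measurable g) :
    Measurable fun ω => f ω ⬝ᵥ g ω :=
  Finset.measurable_sum _ fun k _ =>
    ((measurable_pi_apply k).comp hf).mul ((measurable_pi_apply k).comp hg)

theorem integrable_add_smul_dotProduct_self_and_integral_eq (hm : m ≤ mΩ)
    {M v : Ω → n → ℝ} {ξ : Ω → ℝ} (hM : Measurable[m] M) (hv : Measurable[m] v)
    (hξ : Measurable ξ) (hind : Indep m (MeasurableSpace.comap ξ inferInstance) P)
    (hv1 : ∀ᵐ ω ∂P, v ω ⬝ᵥ v ω = 1) (hMint : Integrable (fun ω => M ω ⬝ᵥ M ω) P)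
    (hξint : Integrable (fun ω => ξ ω ^ 2) P) (hξmean : ∫ ω, ξ ω ∂P = 0) :
    Integrable (fun ω => (M ω + ξ ω • v ω) ⬝ᵥ (M ω + ξ ω • v ω)) P ∧
      ∫ ω, (M ω + ξ ω • v ω) ⬝ᵥ (M ω + ξ ω • v ω) ∂P
        = ∫ ω, M ω ⬝ᵥ M ω ∂P + ∫ ω, ξ ω ^ 2 ∂P := by
  have hvM : Measurable[m] fun ω => v ω ⬝ᵥ M ω := hv.dotProduct hM
  have hexpand : (fun ω => (M ω + ξ ω • v ω) ⬝ᵥ (M ω + ξ ω • v ω))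
      =ᵐ[P] fun ω => M ω ⬝ᵥ M ω + 2 * (ξ ω * (v ω ⬝ᵥ M ω)) + ξ ω ^ 2 := by
    filter_upwards [hv1] with ω hω
    simp only [add_dotProduct, dotProduct_add, smul_dotProduct, dotProduct_smul, smul_eq_mul,
      hω, dotProduct_comm (M ω) (v ω)]
    ring
  have hcross_int : Integrable (fun ω => ξ ω * (v ω ⬝ᵥ M ω)) P := by
    refine (hξint.add hMint).mono' (hξ.mul (hvM.mono hm le_rfl)).aestronglyMeasurable ?_
    filter_upwards [hv1] with ω hω
    have hcs := dotProduct_mul_self_le (v ω) (M ω)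
    rw [hω, one_mul] at hcs
    rw [Real.norm_eq_abs, abs_mul]
    change _ ≤ ξ ω ^ 2 + M ω ⬝ᵥ M ω
    nlinarith [abs_nonneg (ξ ω), abs_nonneg (v ω ⬝ᵥ M ω), sq_nonneg (|ξ ω| - |v ω ⬝ᵥ M ω|),
      sq_abs (ξ ω), abs_mul_abs_self (v ω ⬝ᵥ M ω)]
  have hcross : ∫ ω, ξ ω * (v ω ⬝ᵥ M ω) ∂P = 0 := by
    have hF : IndepFun (fun ω => v ω ⬝ᵥ M ω) ξ P := indep_of_indep_of_le_left hind hvM.comap_le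
    simp_rw [mul_comm (ξ _)]
    rw [hF.integral_fun_mul_eq_mul_integral (hvM.mono hm le_rfl).aestronglyMeasurable
      hξ.aestronglyMeasurable, hξmean, mul_zero]
  have hfirst : Integrable (fun ω => M ω ⬝ᵥ M ω + 2 * (ξ ω * (v ω ⬝ᵥ M ω))) P :=
    hMint.add (hcross_int.const_mul 2)
  refine ⟨(hfirst.add hξint).congr hexpand.symm, ?_⟩
  rw [integral_congr_ae hexpand, integral_add hfirst hξint,
    integral_add hMint (hcross_int.const_mul 2), integral_const_mul, hcross, mul_zero, add_zero]

theorem integrable_and_integral_dotProduct_self_add_sum [IsProbabilityMeasure P]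
    {ℱ : Filtration ℕ mΩ} {η : ℕ → Ω → ℝ} {x : ℕ → Ω → n → ℝ} {σ : ℝ}
    (hη : ∀ i, Measurable[ℱ (i + 1)] (η i))
    (hind : ∀ i, Indep (ℱ i) (MeasurableSpace.comap (η i) inferInstance) P)
    (hx : ∀ i, Measurable[ℱ i] (x i)) (hxunit : ∀ i, ∀ᵐ ω ∂P, x i ω ⬝ᵥ x i ω = 1)
    (hL2 : ∀ i, Integrable (fun ω => η i ω ^ 2) P) (hmean : ∀ i, ∫ ω, η i ω ∂P = 0)
    (hvar : ∀ i, ∫ ω, η i ω ^ 2 ∂P = σ ^ 2) (m₀ : n → ℝ) (t : ℕ) :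
    Integrable (fun ω => (m₀ + ∑ i ∈ range t, η i ω • x i ω) ⬝ᵥ
        (m₀ + ∑ i ∈ range t, η i ω • x i ω)) P ∧
      ∫ ω, (m₀ + ∑ i ∈ range t, η i ω • x i ω) ⬝ᵥ (m₀ + ∑ i ∈ range t, η i ω • x i ω) ∂P
        = m₀ ⬝ᵥ m₀ + t * σ ^ 2 := by
  induction t with
  | zero => simp
  | succ t ih =>
    have hsum : Measurable[ℱ t] fun ω => m₀ + ∑ i ∈ range t, η i ω • x i ω := by
      refine measurable_const.add (Finset.measurable_sum _ fun i hi => ?_)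
      have hit : i + 1 ≤ t := Finset.mem_range.mp hi
      exact ((hη i).mono (ℱ.mono hit) le_rfl).smul ((hx i).mono (ℱ.mono (by omega)) le_rfl)
    obtain ⟨hint, hintegral⟩ := integrable_add_smul_dotProduct_self_and_integral_eq (ℱ.le t)
      hsum (hx t) ((hη t).mono (ℱ.le _) le_rfl) (hind t) (hxunit t) ih.1 (hL2 t) (hmean t)
    simp only [Finset.sum_range_succ, ← add_assoc]
    refine ⟨hint, ?_⟩
    rw [hintegral, ih.2, hvar]
    push_cast
    ring

end Orthogonality

section Asymptotics

variable {Ω : Type*} {mΩ : MeasurableSpace Ω} {P : Measure Ω}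

theorem ofReal_integral_div_le_lintegral {f g : Ω → ℝ} (hf : Integrable f P) (hf0 : 0 ≤ᵐ[P] f)
    {K : ℝ} (hK : 0 < K) (hfg : ∀ᵐ ω ∂P, f ω ≤ K * g ω) :
    ENNReal.ofReal ((∫ ω, f ω ∂P) / K) ≤ ∫⁻ ω, ENNReal.ofReal (g ω) ∂P := by
  rw [← integral_div, ofReal_integral_eq_lintegral_ofReal (hf.div_const K)
    (hf0.mono fun ω h => div_nonneg h hK.le)]
  refine lintegral_mono_ae (hfg.mono fun ω h => ENNReal.ofReal_le_ofReal ?_)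
  rwa [div_le_iff₀ hK, mul_comm]

theorem tendsto_natCast_mul_div_add_sq (a c : ℝ) :
    Tendsto (fun t : ℕ => t * (t * a / (t + c) ^ 2)) atTop (𝓝 a) := by
  have h := ((tendsto_natCast_div_add_atTop c).pow 2).const_mul a
  rw [one_pow, mul_one] at h
  refine h.congr fun t => ?_
  rw [div_pow]
  ring

end Asymptotics

theorem stmt_4_general {d : ℕ} {Ω : Type*} [MeasurableSpace Ω]
    (P : Measure Ω) [IsProbabilityMeasure P]
    (θstar : Fin d → ℝ)
    (W0 : Matrix (Fin d) (Fin d) ℝ) (hW0 : W0.PosDef)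
    (σ : ℝ)
    (η : ℕ → Ω → ℝ) (hηmeas : ∀ i, Measurable (η i))
    (hindep : iIndepFun η P)
    (hL2 : ∀ i, Integrable (fun ω => (η i ω) ^ 2) P)
    (hmean : ∀ i, ∫ ω, η i ω ∂P = 0)
    (hvar : ∀ i, ∫ ω, (η i ω) ^ 2 ∂P = σ ^ 2)
    (x : ℕ → Ω → Fin d → ℝ)
    (hxadapt : ∀ i, Measurable[MeasurableSpace.comap
      (fun ω => (fun k : Fin i => η (k : ℕ) ω)) inferInstance] (x i))
    (hxunit : ∀ᵐ ω ∂P, ∀ i, x i ω ⬝ᵥ x i ω = 1)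
    (θhat : (t : ℕ) → Ω → Fin d → ℝ)
    (hθhat : ∀ t ω, θhat t ω =
      (W0 + (Matrix.of fun (i : Fin t) j => x (i : ℕ) ω j)ᵀ
          * (Matrix.of fun (i : Fin t) j => x (i : ℕ) ω j))⁻¹
        *ᵥ ((Matrix.of fun (i : Fin t) j => x (i : ℕ) ω j)ᵀ
          *ᵥ ((Matrix.of fun (i : Fin t) j => x (i : ℕ) ω j) *ᵥ θstar
              + fun i : Fin t => η (i : ℕ) ω))) :
    ENNReal.ofReal (σ ^ 2)
      ≤ atTop.liminf (fun t : ℕ => (t : ENNReal)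
          * ∫⁻ ω, ENNReal.ofReal ((θhat t ω - θstar) ⬝ᵥ (θhat t ω - θstar)) ∂P) := by
  set c := ‖W0‖
  have hmoment := integrable_and_integral_dotProduct_self_add_sum
    (ℱ := pastFiltration η hηmeas) measurable_pastFiltration_succ hindep.indep_pastFiltration
    hxadapt (fun i => hxunit.mono fun ω h => h i) hL2 hmean hvar (-(W0 *ᵥ θstar))
  have hbound : ∀ t : ℕ, 0 < t → ENNReal.ofReal (t * σ ^ 2 / (t + c) ^ 2)
      ≤ ∫⁻ ω, ENNReal.ofReal ((θhat t ω - θstar) ⬝ᵥ (θhat t ω - θstar)) ∂P := by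
    intro t ht
    refine le_trans ?_ (ofReal_integral_div_le_lintegral (hmoment t).1
      (ae_of_all _ fun ω => dotProduct_self_nonneg _)
      (pow_pos (add_pos_of_pos_of_nonneg (Nat.cast_pos.mpr ht) (norm_nonneg W0)) 2) ?_)
    · rw [(hmoment t).2]
      gcongr
      linarith [dotProduct_self_nonneg (-(W0 *ᵥ θstar))]
    · filter_upwards [hxunit] with ω hω
      rw [hθhat, neg_add_eq_sub, ← transpose_of_mulVec_eq_sum_range]
      exact dotProduct_self_le_of_regularizedLeastSquares hW0 _ (fun i => hω i) θstar _
  calc ENNReal.ofReal (σ ^ 2)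
      = atTop.liminf (fun t : ℕ => ENNReal.ofReal (t * (t * σ ^ 2 / (t + c) ^ 2))) :=
        ((ENNReal.tendsto_ofReal (tendsto_natCast_mul_div_add_sq _ c)).liminf_eq).symm
    _ ≤ _ := by
      refine liminf_le_liminf ((eventually_gt_atTop 0).mono fun t ht => ?_)
      rw [ENNReal.ofReal_mul t.cast_nonneg, ENNReal.ofReal_natCast]
      gcongr
      exact hbound t ht

/-- Asymptotic lower bound: for any adaptive unit-norm action policy,
`liminf_{t→∞} t·E[‖θ̂_t − θ*‖₂²] ≥ σ²`, i.e. the mean square error is at least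
`σ²/t + o(1/t)`. (The expectation of the nonnegative squared error is written as a
Lebesgue integral with values in `ℝ≥0∞`.) -/
theorem stmt_4 {d : ℕ} (hd : 1 ≤ d) {Ω : Type*} [MeasurableSpace Ω]
    (P : Measure Ω) [IsProbabilityMeasure P]
    (θstar : Fin d → ℝ)
    (W0 : Matrix (Fin d) (Fin d) ℝ) (hW0 : W0.PosDef)
    (σ : ℝ)
    (η : ℕ → Ω → ℝ) (hηmeas : ∀ i, Measurable (η i))
    (hindep : iIndepFun η P)
    (hident : ∀ i, IdentDistrib (η i) (η 0) P P)
    (hL1 : ∀ i, Integrable (η i) P)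
    (hL2 : ∀ i, Integrable (fun ω => (η i ω) ^ 2) P)
    (hmean : ∀ i, ∫ ω, η i ω ∂P = 0)
    (hvar : ∀ i, ∫ ω, (η i ω) ^ 2 ∂P = σ ^ 2)
    (x : ℕ → Ω → Fin d → ℝ)
    (hxadapt : ∀ i, Measurable[MeasurableSpace.comap
      (fun ω => (fun k : Fin i => η (k : ℕ) ω)) inferInstance] (x i))
    (hxunit : ∀ᵐ ω ∂P, ∀ i, x i ω ⬝ᵥ x i ω = 1)
    (θhat : (t : ℕ) → Ω → Fin d → ℝ)
    (hθhat : ∀ t ω, θhat t ω =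
      (W0 + (Matrix.of fun (i : Fin t) j => x (i : ℕ) ω j)ᵀ
          * (Matrix.of fun (i : Fin t) j => x (i : ℕ) ω j))⁻¹
        *ᵥ ((Matrix.of fun (i : Fin t) j => x (i : ℕ) ω j)ᵀ
          *ᵥ ((Matrix.of fun (i : Fin t) j => x (i : ℕ) ω j) *ᵥ θstar
              + fun i : Fin t => η (i : ℕ) ω))) :
    ENNReal.ofReal (σ ^ 2)
      ≤ atTop.liminf (fun t : ℕ => (t : ENNReal)
          * ∫⁻ ω, ENNReal.ofReal ((θhat t ω - θstar) ⬝ᵥ (θhat t ω - θstar)) ∂P) :=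
  stmt_4_general P θstar W0 hW0 σ η hηmeas hindep hL2 hmean hvar x hxadapt hxunit θhat hθhat
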